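/- arXiv:0812.0283 — 5 statements merged into one kernel-verified Lean document; each statement's English description precedes it below -/
import Mathlib

section
/- Let h ∈ ℕ and let α, γ ∈ Bool. The number of fixed points x of the h-amplifier with x(a_0) = α and x(c_0) = γ equals 1 if α = γ, and equals 2^{h+1} if α ≠ γ. -/
/-- The local transition functions of the `h`-amplifier.  The vertex set is
`Fin 3 × Fin (h+1)`, where `(0, r)` is `a_r`, `(1, r)` is `b_r` and `(2, r)` is `c_r`. -/
def ampF (h : ℕ) (v : Fin 3 × Fin (h + 1)) (x : Fin 3 × Fin (h + 1) → Bool) : Bool :=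
  if v.1 = 1 then
    (x (1, v.2) || x (0, v.2)) && (x (1, v.2) || x (2, v.2)) && (x (0, v.2) || x (2, v.2))
  else if hr : (v.2 : ℕ) = 0 then x v
  else x (v.1, ⟨(v.2 : ℕ) - 1, by have := v.2.isLt; omega⟩)

/-!
On a fixed point the `a`- and `c`-lines are shift registers, hence constant (equal to `α` and `γ`),
and each `b_r` is a fixed point of `t ↦ majority t α γ`. If `α = γ` the majority forces `b_r = α`;
if `α ≠ γ` the majority vote is decided by `b_r` itself, so the `b`-line is arbitrary.
-/

def majority (p q r : Bool) : Bool :=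
  (p || q) && (p || r) && (q || r)

lemma card_majority_fixed (α γ : Bool) :
    Fintype.card {t : Bool // majority t α γ = t} = if α = γ then 1 else 2 := by
  cases α <;> cases γ <;> decide

lemma ampF_fixed_iff {h : ℕ} (x : Fin 3 × Fin (h + 1) → Bool) :
    (∀ v, ampF h v x = x v) ↔
      (∀ i ≠ 1, ∀ r, x (i, r) = x (i, 0)) ∧
        ∀ r, majority (x (1, r)) (x (0, r)) (x (2, r)) = x (1, r) := by
  constructor
  · intro hx
    refine ⟨fun i hi ⟨r, hr⟩ => ?_, fun r => by simpa only [ampF, majority, if_pos] using hx (1, r)⟩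
    induction r with
    | zero => rfl
    | succ r ih =>
      have hstep := hx (i, ⟨r + 1, hr⟩)
      simp only [ampF, hi, if_false, Nat.add_one_ne_zero, dif_neg, not_false_eq_true,
        Nat.add_sub_cancel] at hstep
      rw [← hstep, ih (by omega)]
  · rintro ⟨hline, hb⟩ ⟨i, r⟩
    by_cases hi : i = 1
    · subst hi
      exact hb r
    · unfold ampF
      rw [if_neg hi]
      split
      · rfl
      · rw [hline i hi, hline i hi r]

def ampFixedPointsEquiv (h : ℕ) (α γ : Bool) :
    {x : Fin 3 × Fin (h + 1) → Bool // (∀ v, ampF h v x = x v) ∧ x (0, 0) = α ∧ x (2, 0) = γ} ≃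
      {b : Fin (h + 1) → Bool // ∀ r, majority (b r) α γ = b r} where
  toFun x := ⟨fun r => x.1 (1, r), fun r => by
    obtain ⟨x, hx, ha, hc⟩ := x
    obtain ⟨hline, hb⟩ := (ampF_fixed_iff x).1 hx
    simpa only [hline 0 (by decide), hline 2 (by decide), ha, hc] using hb r⟩
  invFun b := ⟨fun v => ![fun _ => α, b.1, fun _ => γ] v.1 v.2,
    (ampF_fixed_iff _).2 ⟨fun i hi r => by fin_cases i <;> simp_all, fun r => b.2 r⟩, rfl, rfl⟩
  left_inv := by
    rintro ⟨x, hx, ha, hc⟩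
    have hline := ((ampF_fixed_iff x).1 hx).1
    ext ⟨i, r⟩
    fin_cases i
    · simp [hline 0 (by decide) r, ha]
    · rfl
    · simp [hline 2 (by decide) r, hc]
  right_inv _ := rfl

/-- The number of fixed points `x` of the `h`-amplifier with `x a_0 = α` and `x c_0 = γ`
is `1` if `α = γ` and `2 ^ (h + 1)` otherwise. -/
theorem stmt2 (h : ℕ) (α γ : Bool) :
    Fintype.card {x : Fin 3 × Fin (h + 1) → Bool //
        (∀ v, ampF h v x = x v) ∧ x (0, 0) = α ∧ x (2, 0) = γ} =
      if α = γ then 1 else 2 ^ (h + 1) := by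
  have e := (ampFixedPointsEquiv h α γ).trans
    (Equiv.subtypePiEquivPi (p := fun _ t => majority t α γ = t))
  rw [Fintype.card_congr e, Fintype.card_pi, Finset.prod_const, card_majority_fixed,
    Finset.card_univ, Fintype.card_fin]
  split_ifs <;> simp
end

section
/- Let G be a finite simple graph on vertex set U. The number of pairs (x, b), where x : U → Bool and b ∈ Bool are such that for every edge {i, j} of G one has (b ∨ x(i)) ∧ (b ∨ x(j)) ∧ (x(i) ∨ x(j)) = b, equals 2 times the number of vertex covers of G. -/
/-!
A fixed point `(x, b)` is determined by `b` together with the level set `C = {i | x i = b}`,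
and since the majority of `b, x i, x j` equals `b` exactly when `x i = b` or `x j = b`, the
fixed-point condition says precisely that `C` is a vertex cover. Each vertex cover thus arises
once for each of the two values of `b`.
-/

open Finset

theorem Bool.majority_eq_left_iff (b x y : Bool) :
    ((b || x) && (b || y) && (x || y)) = b ↔ x = b ∨ y = b := by
  revert b x y
  decide

section LevelSet

variable {U : Type*} [Fintype U] [DecidableEq U]

/-- Encodes `x` by its level set at `b`; the values off that set are then forced to be `!b`. -/
def levelSetProdEquiv : (U → Bool) × Bool ≃ Finset U × Bool where
  toFun p := (univ.filter (p.1 · = p.2), p.2)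
  invFun q := (fun i => if i ∈ q.1 then q.2 else !q.2, q.2)
  left_inv := by
    rintro ⟨x, b⟩
    ext i
    · simp only [mem_filter, mem_univ, true_and]
      cases x i <;> cases b <;> rfl
    · rfl
  right_inv q := by
    ext i
    · by_cases h : i ∈ q.1 <;> simp [h]
    · rfl

@[simp]
theorem mem_levelSetProdEquiv_fst {p : (U → Bool) × Bool} {i : U} :
    i ∈ (levelSetProdEquiv p).1 ↔ p.1 i = p.2 := by
  simp [levelSetProdEquiv]

theorem majority_fixed_iff_isVertexCover_levelSet (G : SimpleGraph U) (p : (U → Bool) × Bool) :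
    (∀ i j, G.Adj i j → ((p.2 || p.1 i) && (p.2 || p.1 j) && (p.1 i || p.1 j)) = p.2) ↔
      G.IsVertexCover ((levelSetProdEquiv p).1 : Set U) := by
  simp only [SimpleGraph.IsVertexCover, Finset.mem_coe, mem_levelSetProdEquiv_fst,
    Bool.majority_eq_left_iff]

end LevelSet

/-- For a finite simple graph `G` on vertex set `U`, the number of pairs `(x, b)` with
`x : U → Bool`, `b : Bool` such that for every edge `{i, j}` of `G` the majority
`(b ∨ x i) ∧ (b ∨ x j) ∧ (x i ∨ x j)` equals `b`, is twice the number of vertex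
covers of `G`. -/
theorem stmt12 {U : Type*} [Fintype U] [DecidableEq U]
    (G : SimpleGraph U) [DecidableRel G.Adj] :
    Fintype.card {p : (U → Bool) × Bool //
        ∀ i j, G.Adj i j → ((p.2 || p.1 i) && (p.2 || p.1 j) && (p.1 i || p.1 j)) = p.2} =
    2 * Fintype.card {C : Finset U // ∀ i j, G.Adj i j → i ∈ C ∨ j ∈ C} := by
  have fixedPointsEquiv :=
    (levelSetProdEquiv.subtypeEquiv (majority_fixed_iff_isVertexCover_levelSet G)).trans
      (Equiv.prodSubtypeFstEquivSubtypeProd (p := fun C : Finset U => G.IsVertexCover (C : Set U)))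
  rw [Fintype.card_eq_nat_card, Nat.card_congr fixedPointsEquiv, Nat.card_prod,
    Nat.card_eq_fintype_card (α := Bool), Fintype.card_bool, mul_comm, ← Nat.card_eq_fintype_card]
  rfl
end

section
/- Let n, m ∈ ℕ and let (p_k, q_k) ∈ {1,…,n}² for k = 1,…,m. Consider the boolean dynamical system on the vertex set {1,…,n, n+1} with f_i(x) = x(i) for 1 ≤ i ≤ n and f_{n+1}(x) = x(n+1) ∧ ⋀_{k=1}^m (x(p_k) ∨ x(q_k)). The number of fixed points of this system equals #sat + 2^n, where #sat is the number of assignments y : {1,…,n} → Bool with y(p_k) ∨ y(q_k) = true for all k. -/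
/-!
A configuration is determined by its restriction `y` to the first `n` vertices together with
the bit `b` at the extra vertex. The first `n` local functions are the identity, so the only
fixed-point condition is that of the extra vertex, `b ∧ sat y = b`, i.e. `b → sat y`. Hence the
fixed points with `b = true` are the satisfying assignments, while all `2 ^ n` configurations
with `b = false` are fixed.
-/

/-- The boolean dynamical system of the `S₁₀`-reduction: vertices `Sum.inl i` (`i : Fin n`)
carry the identity, and the extra vertex `Sum.inr ()` carries
`f(x) = x(n+1) ∧ ⋀_{k=1}^m (x p_k ∨ x q_k)`. -/
noncomputable def sys14 (n m : ℕ) (p q : Fin m → Fin n) (v : Fin n ⊕ Unit)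
    (x : Fin n ⊕ Unit → Bool) : Bool :=
  match v with
  | Sum.inl i => x (Sum.inl i)
  | Sum.inr _ => x (Sum.inr ()) &&
      Finset.univ.inf fun k : Fin m => x (Sum.inl (p k)) || x (Sum.inl (q k))

theorem Finset.inf_bool_eq_true_iff {ι : Type*} (s : Finset ι) (g : ι → Bool) :
    s.inf g = true ↔ ∀ i ∈ s, g i = true :=
  Finset.inf_eq_top_iff g s

theorem card_subtype_prod_bool_imp {α : Type*} [Fintype α] (P : α → Prop) [DecidablePred P] :
    Fintype.card {z : α × Bool // z.2 = true → P z.1} =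
      Fintype.card {a // P a} + Fintype.card α := by
  simp only [Fintype.card_subtype, Finset.card_filter, Fintype.sum_prod_type, Fintype.sum_bool]
  simp [Finset.sum_add_distrib]

theorem sys14_isFixedPt_iff (n m : ℕ) (p q : Fin m → Fin n) (x : Fin n ⊕ Unit → Bool) :
    (∀ v, sys14 n m p q v x = x v) ↔
      (x (Sum.inr ()) = true → ∀ k, (x (Sum.inl (p k)) || x (Sum.inl (q k))) = true) := by
  have hclause : (Finset.univ.inf fun k => x (Sum.inl (p k)) || x (Sum.inl (q k))) = true ↔
      ∀ k, (x (Sum.inl (p k)) || x (Sum.inl (q k))) = true := by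
    simp [Finset.inf_bool_eq_true_iff]
  rw [← hclause, Sum.forall]
  simp only [sys14, Unique.forall_iff]
  cases x (Sum.inr ()) <;> simp

/-- The number of fixed points of the system `sys14` equals `#sat + 2 ^ n`, where `#sat`
is the number of satisfying assignments of the positive 2-CNF `⋀_k (x_{p_k} ∨ x_{q_k})`. -/
theorem stmt14 (n m : ℕ) (p q : Fin m → Fin n) :
    Fintype.card {x : Fin n ⊕ Unit → Bool // ∀ v, sys14 n m p q v x = x v} =
    Fintype.card {y : Fin n → Bool // ∀ k, (y (p k) || y (q k)) = true} + 2 ^ n := by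
  let split : (Fin n ⊕ Unit → Bool) ≃ (Fin n → Bool) × Bool :=
    (Equiv.sumArrowEquivProdArrow _ _ _).trans
      ((Equiv.refl _).prodCongr (Equiv.funUnique Unit Bool))
  have fixed_equiv : {x : Fin n ⊕ Unit → Bool // ∀ v, sys14 n m p q v x = x v} ≃
      {z : (Fin n → Bool) × Bool // z.2 = true → ∀ k, (z.1 (p k) || z.1 (q k)) = true} :=
    split.subtypeEquiv (sys14_isFixedPt_iff n m p q)
  rw [Fintype.card_congr fixed_equiv,
    card_subtype_prod_bool_imp (fun y : Fin n → Bool => ∀ k, (y (p k) || y (q k)) = true),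
    Fintype.card_fun, Fintype.card_bool, Fintype.card_fin]
end

section
/- Let n, m ∈ ℕ and let (p_k, q_k) ∈ {1,…,n}² for k = 1,…,m. Consider the boolean dynamical system on the vertex set {0, 1,…,n, n+1} with f_i(x) = x(i) for 0 ≤ i ≤ n and f_{n+1}(x) = x(0) ∨ ((⋀_{k=1}^m (x(p_k) ∨ x(q_k))) ∧ x(n+1)). The number of fixed points of this system equals #sat + 2^{n+1}, where #sat is the number of assignments y : {1,…,n} → Bool with y(p_k) ∨ y(q_k) = true for all k. -/
/-!
Only vertex `n+1` can fail to be fixed, so a fixed point is a triple `(y, a, b)` — values on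
`1,…,n`, at `0` and at `n+1` — with `a ∨ (C(y) ∧ b) = b`, where `C(y)` is the value of the
2-CNF at `y`. For each `y` the solutions `(a, b)` are `(false, false)`, `(true, true)` and,
exactly when `C(y)` holds, `(false, true)`. Summing over `y` gives `2 · 2ⁿ + #sat`.
-/

/-- The boolean dynamical system of the `S₀₀`-reduction on the vertex set
`{0} ⊕ {1,…,n} ⊕ {n+1}`: vertex `0` (`Sum.inl ()`) and the variable vertices
(`Sum.inr (Sum.inl i)`) carry the identity, and vertex `n+1` (`Sum.inr (Sum.inr ())`)
carries `f(x) = x 0 ∨ ((⋀_{k=1}^m (x p_k ∨ x q_k)) ∧ x (n+1))`. -/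
noncomputable def sys16 (n m : ℕ) (p q : Fin m → Fin n) (v : Unit ⊕ Fin n ⊕ Unit)
    (x : Unit ⊕ Fin n ⊕ Unit → Bool) : Bool :=
  match v with
  | Sum.inl _ => x (Sum.inl ())
  | Sum.inr (Sum.inl i) => x (Sum.inr (Sum.inl i))
  | Sum.inr (Sum.inr _) =>
      x (Sum.inl ()) ||
        ((Finset.univ.inf fun k : Fin m =>
            x (Sum.inr (Sum.inl (p k))) || x (Sum.inr (Sum.inl (q k)))) &&
          x (Sum.inr (Sum.inr ())))

theorem Finset.inf_eq_true_iff {ι : Type*} {s : Finset ι} {f : ι → Bool} :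
    s.inf f = true ↔ ∀ i ∈ s, f i = true :=
  Finset.inf_eq_top_iff f s

def Equiv.unitSumSumUnitArrow (α β : Type*) : (Unit ⊕ α ⊕ Unit → β) ≃ (α → β) × β × β where
  toFun x := (fun i => x (.inr (.inl i)), x (.inl ()), x (.inr (.inr ())))
  invFun z := Sum.elim (fun _ => z.2.1) (Sum.elim z.1 fun _ => z.2.2)
  left_inv x := by funext v; rcases v with ⟨⟩ | i | ⟨⟩ <;> rfl
  right_inv _ := rfl

theorem card_bool_pair_or_and_eq (c : Bool) :
    Fintype.card {ab : Bool × Bool // (ab.1 || (c && ab.2)) = ab.2} = 2 + if c then 1 else 0 := by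
  cases c <;> rfl

theorem card_or_and_eq_self {Y : Type*} [Fintype Y] (c : Y → Bool) :
    Fintype.card {z : Y × Bool × Bool // (z.2.1 || (c z.1 && z.2.2)) = z.2.2} =
      Fintype.card {y // c y = true} + 2 * Fintype.card Y := by
  classical
  rw [Fintype.card_congr (Equiv.subtypeProdEquivSigmaSubtype fun y (ab : Bool × Bool) =>
      (ab.1 || (c y && ab.2)) = ab.2), Fintype.card_sigma]
  simp only [card_bool_pair_or_and_eq]
  rw [Finset.sum_add_distrib, Finset.sum_boole, Nat.cast_id, Fintype.card_subtype,
    Finset.sum_const, Finset.card_univ, smul_eq_mul]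
  ring

theorem sys16_fixed_iff {n m : ℕ} (p q : Fin m → Fin n) (x : Unit ⊕ Fin n ⊕ Unit → Bool) :
    (∀ v, sys16 n m p q v x = x v) ↔
      sys16 n m p q (.inr (.inr ())) x = x (.inr (.inr ())) :=
  ⟨fun h => h _, fun h v => by rcases v with ⟨⟩ | i | ⟨⟩ <;> first | rfl | exact h⟩

/-- The number of fixed points of the system `sys16` equals `#sat + 2 ^ (n + 1)`, where
`#sat` is the number of satisfying assignments of the positive 2-CNF
`⋀_k (x_{p_k} ∨ x_{q_k})`. -/
theorem stmt16 (n m : ℕ) (p q : Fin m → Fin n) :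
    Fintype.card {x : Unit ⊕ Fin n ⊕ Unit → Bool // ∀ v, sys16 n m p q v x = x v} =
    Fintype.card {y : Fin n → Bool // ∀ k, (y (p k) || y (q k)) = true} + 2 ^ (n + 1) := by
  let clauses (y : Fin n → Bool) : Bool := Finset.univ.inf fun k => y (p k) || y (q k)
  have fixedEquiv : {x : Unit ⊕ Fin n ⊕ Unit → Bool // ∀ v, sys16 n m p q v x = x v} ≃
      {z : (Fin n → Bool) × Bool × Bool // (z.2.1 || (clauses z.1 && z.2.2)) = z.2.2} :=
    (Equiv.unitSumSumUnitArrow _ _).subtypeEquiv fun x => sys16_fixed_iff p q x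
  have satEquiv :
      {y // clauses y = true} ≃ {y : Fin n → Bool // ∀ k, (y (p k) || y (q k)) = true} :=
    Equiv.subtypeEquivRight fun y => by
      simp only [clauses, Finset.inf_eq_true_iff, Finset.mem_univ, true_implies]
  rw [Fintype.card_congr fixedEquiv, card_or_and_eq_self, Fintype.card_congr satEquiv,
    Fintype.card_fun, Fintype.card_bool, Fintype.card_fin, pow_succ, mul_comm]
end

section
/- Let maj : Bool³ → Bool be maj(x, y, z) = (x ∧ y) ∨ (x ∧ z) ∨ (y ∧ z). Fix a, b ∈ Bool and let T be a binary tree whose leaves are labeled by pairs (p, q) of Booleans; define eval_{a,b} by eval_{a,b}(leaf(p, q)) = maj(p, q, b) and eval_{a,b}(node(L, R)) = maj(eval_{a,b}(L), eval_{a,b}(R), a). Then: eval_{false,false}(T) = ⋀_{(p,q) a leaf}(p ∧ q); eval_{false,true}(T) = ⋀_{(p,q) a leaf}(p ∨ q); eval_{true,false}(T) = ⋁_{(p,q) a leaf}(p ∧ q); and eval_{true,true}(T) = ⋁_{(p,q) a leaf}(p ∨ q). -/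
/-!
Fixing the third argument of `maj` to `false` gives `∧`, fixing it to `true` gives `∨`.
So with `a` fixed the nested formula is the conjunction (`a = false`) or disjunction
(`a = true`) of its leaf values, and each leaf value is `p ∧ q` or `p ∨ q` according to `b`.
-/

/-- The majority function, the basis of the Post class `D₂`:
`maj x y z = (x ∧ y) ∨ (x ∧ z) ∨ (y ∧ z)`. -/
def maj (x y z : Bool) : Bool := (x && y) || (x && z) || (y && z)

/-- A binary tree whose leaves are labeled by pairs of Booleans. -/
inductive PairTree where
  | leaf : Bool → Bool → PairTree
  | node : PairTree → PairTree → PairTree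

/-- Evaluation of the nested majority formula with parameters `a` and `b`:
a leaf `(p, q)` evaluates to `maj p q b`, and a node to `maj (eval L) (eval R) a`. -/
def PairTree.eval (a b : Bool) : PairTree → Bool
  | .leaf p q => maj p q b
  | .node L R => maj (L.eval a b) (R.eval a b) a

/-- The list of leaf labels of a tree. -/
def PairTree.leaves : PairTree → List (Bool × Bool)
  | .leaf p q => [(p, q)]
  | .node L R => L.leaves ++ R.leaves

@[simp]
theorem maj_false (x y : Bool) : maj x y false = (x && y) := by
  cases x <;> cases y <;> rfl

@[simp]
theorem maj_true (x y : Bool) : maj x y true = (x || y) := by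
  cases x <;> cases y <;> rfl

namespace PairTree

theorem eval_false (b : Bool) (T : PairTree) :
    T.eval false b = T.leaves.all fun pq => maj pq.1 pq.2 b := by
  induction T with
  | leaf p q => simp [eval, leaves]
  | node L R ihL ihR => simp [eval, leaves, ihL, ihR]

theorem eval_true (b : Bool) (T : PairTree) :
    T.eval true b = T.leaves.any fun pq => maj pq.1 pq.2 b := by
  induction T with
  | leaf p q => simp [eval, leaves]
  | node L R ihL ihR => simp [eval, leaves, ihL, ihR]

end PairTree

/-- The four closed forms of the nested majority formula, according to the values of the
parameters `(a, b)`: `⋀ (p ∧ q)`, `⋀ (p ∨ q)`, `⋁ (p ∧ q)` and `⋁ (p ∨ q)` over the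
leaves `(p, q)` of the tree. -/
theorem stmt17 (T : PairTree) :
    T.eval false false = (T.leaves.all fun pq => pq.1 && pq.2) ∧
    T.eval false true = (T.leaves.all fun pq => pq.1 || pq.2) ∧
    T.eval true false = (T.leaves.any fun pq => pq.1 && pq.2) ∧
    T.eval true true = (T.leaves.any fun pq => pq.1 || pq.2) := by
  simp [PairTree.eval_false, PairTree.eval_true]
end
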